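/- arXiv:2006.00224 — 2 statements merged into one kernel-verified Lean document; each statement's English description precedes it below -/
import Mathlib

section
/- Let K be a field of characteristic zero, s ≥ 3, r ≥ 2, and assume r ≥ 3 or s ≥ 4. Let L be the free nilpotent Lie algebra of rank r and step s over K with generators X_1, …, X_r. Define η_i = (ad X_i)^{s−2}(X_{i+1}) for i = 1, …, r−1 and η_r = (ad X_r)^{s−2}(X_1). Then the family (η_1, …, η_r) is linearly independent in L, and the family (⁅X_1, η_1⁆, …, ⁅X_r, η_r⁆) is linearly independent in L. -/
/-!
Send the free Lie algebra on `α` to the algebra `K[FreeAddMonoid α]` of noncommutative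
polynomials, brackets becoming commutators. The `k`-th term of the lower central series is
spanned by brackets of `k + 1` generators, so it lands in the span of words of length `> k`;
hence the coefficient of a word of length `≤ s` is a linear form on the free nilpotent Lie
algebra of step `s`.

Expanding `(ad X_j)^n X_{σ j}` as a signed sum of words, the word `X_j^n X_{σ j}` occurs once,
with coefficient `1`, and every word has letter content `n • {j} + {σ j}`. When `σ` has no
fixed points and either `n ≠ 1` or `σ²` has no fixed points, this content determines `j`, so
the coefficients of the words `X_i^n X_{σ i}` form a family dual to
`(ad X_j)^n X_{σ j}`. Take `σ` to be the cyclic shift and `n = s - 2`, resp. `n = s - 1` for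
the brackets `⁅X_i, η_i⁆ = (ad X_i)^{s-1} X_{σ i}`.
-/

/-- The free nilpotent Lie algebra of rank `r` and step `s` over `K`: the quotient of the
free Lie algebra `F` on `r` generators by the `s`-th term `C_s(F)` of its lower central
series (`C_0 = F`, `C_{k+1} = ⁅F, C_k⁆`). -/
abbrev FreeNilpotentLie (K : Type*) [Field K] (r s : ℕ) :=
  FreeLieAlgebra K (Fin r) ⧸
    LieModule.lowerCentralSeries K (FreeLieAlgebra K (Fin r)) (FreeLieAlgebra K (Fin r)) s

/-- The canonical generators `X_1, …, X_r` of the free nilpotent Lie algebra, i.e. the images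
of the free generators. -/
noncomputable def FreeNilpotentLie.gen (K : Type*) [Field K] (r s : ℕ) (i : Fin r) :
    FreeNilpotentLie K r s :=
  LieSubmodule.Quotient.mk' _ (FreeLieAlgebra.of K i)

/-- `G₁`: the `K`-span of the generators. -/
noncomputable def FreeNilpotentLie.G1 (K : Type*) [Field K] (r s : ℕ) :
    Submodule K (FreeNilpotentLie K r s) :=
  Submodule.span K (Set.range (FreeNilpotentLie.gen K r s))

open LieAlgebra LieModule AddMonoidAlgebra

attribute [local instance 100] LieRing.ofAssociativeRing

theorem finRotate_ne_self {r : ℕ} (hr : 2 ≤ r) (a : Fin r) : finRotate r a ≠ a :=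
  Equiv.Perm.mem_support.mp (by simp [support_finRotate_of_le hr])

theorem finRotate_finRotate_ne_self {r : ℕ} (hr : 3 ≤ r) (a : Fin r) :
    finRotate r (finRotate r a) ≠ a := by
  obtain ⟨m, rfl⟩ : ∃ m, r = m + 3 := ⟨r - 3, by omega⟩
  intro h
  rw [finRotate_apply, finRotate_apply, add_assoc, add_eq_left, Fin.ext_iff] at h
  simp [Fin.val_add, Nat.mod_eq_of_lt (show 2 < m + 3 by omega)] at h

theorem Multiset.eq_of_nsmul_singleton_add_singleton_eq {α : Type*} {σ : Equiv.Perm α}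
    (hσ : ∀ a, σ a ≠ a) {n : ℕ} (hn : n ≠ 1 ∨ ∀ a, σ (σ a) ≠ a) {i j : α}
    (h : n • {i} + {σ i} = n • ({j} : Multiset α) + {σ j}) : i = j := by
  classical
  by_contra hij
  -- counting the letters `j` and `σ j` forces `n = 1`, `σ i = j` and `σ j = i`
  have hj := congrArg (Multiset.count j) h
  have hσj := congrArg (Multiset.count (σ j)) h
  simp only [Multiset.count_add, Multiset.count_nsmul, Multiset.count_singleton, if_true,
    Ne.symm hij, (hσ j).symm, hσ j, σ.injective.eq_iff, if_false] at hj hσj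
  split_ifs at hj hσj with hσi hσj' <;> try omega
  refine hn.elim (fun hn => hn (by omega)) fun hσσ => hσσ i ?_
  rw [← hσi, hσj']

section Lie

variable {R L : Type*} [CommRing R] [LieRing L] [LieAlgebra R L]

theorem FreeLieAlgebra.lift_apply_mem {X : Type*} {f : X → L} {H : LieSubalgebra R L}
    (hf : ∀ x, f x ∈ H) (a : FreeLieAlgebra R X) : FreeLieAlgebra.lift R f a ∈ H := by
  have : H.incl.comp (FreeLieAlgebra.lift R fun x => ⟨f x, hf x⟩) = FreeLieAlgebra.lift R f :=
    FreeLieAlgebra.hom_ext fun x => by simp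
  rw [← this]
  exact Subtype.prop _

theorem LieHom.map_ad_pow {L' : Type*} [LieRing L'] [LieAlgebra R L'] (f : L →ₗ⁅R⁆ L')
    (x y : L) (n : ℕ) : f ((ad R L x ^ n) y) = (ad R L' (f x) ^ n) (f y) := by
  induction n with
  | zero => rfl
  | succ n ih =>
    rw [pow_succ', Module.End.mul_apply, ad_apply, LieHom.map_lie, ih, pow_succ',
      Module.End.mul_apply, ad_apply]

theorem LieSubmodule.Quotient.ad_pow_mk' (I : LieIdeal R L) (x y : L) (n : ℕ) :
    (ad R (L ⧸ I) (mk' I x) ^ n) (mk' I y) = mk' I ((ad R L x ^ n) y) := by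
  induction n with
  | zero => rfl
  | succ n ih => rw [pow_succ', Module.End.mul_apply, ih, pow_succ', Module.End.mul_apply]; rfl

variable {A : Type*} [Ring A] [Algebra R A]

theorem LieHom.mem_pow_of_mem_lowerCentralSeries (f : L →ₗ⁅R⁆ A) {S : Submodule R A}
    (hS : ∀ x, f x ∈ S) {k : ℕ} {x : L} (hx : x ∈ lowerCentralSeries R L L k) :
    f x ∈ S ^ (k + 1) := by
  induction k generalizing x with
  | zero => simpa using hS x
  | succ k ih =>
    rw [lowerCentralSeries_succ, ← LieSubmodule.mem_toSubmodule,
      LieSubmodule.lieIdeal_oper_eq_linear_span'] at hx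
    refine Submodule.span_induction ?_ (by simp)
      (fun _ _ _ _ hx hy => by rw [map_add]; exact add_mem hx hy)
      (fun c _ _ h => by rw [map_smul]; exact Submodule.smul_mem _ c h) hx
    rintro _ ⟨y, -, z, hz, rfl⟩
    rw [LieHom.map_lie, Ring.lie_def]
    refine sub_mem ?_ ?_
    · rw [pow_succ']; exact Submodule.mul_mem_mul (hS y) (ih hz)
    · rw [pow_succ]; exact Submodule.mul_mem_mul (ih hz) (hS y)

theorem SetLike.ad_pow_mem_graded {ι : Type*} [AddCommMonoid ι] (𝒜 : ι → Submodule R A)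
    [SetLike.GradedMonoid 𝒜] {a b : A} {d e : ι} (ha : a ∈ 𝒜 d) (hb : b ∈ 𝒜 e) (n : ℕ) :
    (ad R A a ^ n) b ∈ 𝒜 (n • d + e) := by
  induction n with
  | zero => simpa using hb
  | succ n ih =>
    rw [pow_succ', Module.End.mul_apply, ad_apply, Ring.lie_def]
    refine sub_mem ?_ ?_
    · convert SetLike.mul_mem_graded ha ih using 2
      rw [succ_nsmul', add_assoc]
    · convert SetLike.mul_mem_graded ih ha using 2
      rw [succ_nsmul, add_right_comm]

end Lie

theorem FreeAddMonoid.add_of_ne_add_of {α : Type*} {x y : α} (h : x ≠ y)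
    (u v : FreeAddMonoid α) : u + of x ≠ v + of y := by
  intro huv
  have := congrArg toList huv
  simp only [toList_add, toList_of] at this
  exact h (List.singleton_inj.mp (List.append_inj' this rfl).2)

noncomputable def FreeAddMonoid.lengthHom {α : Type*} : FreeAddMonoid α →+ ℕ := lift fun _ => 1

noncomputable def FreeAddMonoid.content {α : Type*} : FreeAddMonoid α →+ Multiset α :=
  lift fun a => {a}

namespace AddMonoidAlgebra

variable (R : Type*) [CommRing R] {M : Type*} [AddMonoid M] (D : M →+ ℕ)

noncomputable def degreeGE (k : ℕ) : Submodule R R[M] := supported R R {m | k ≤ D m}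

theorem degreeGE_mul_le (a b : ℕ) : degreeGE R D a * degreeGE R D b ≤ degreeGE R D (a + b) := by
  classical
  refine Submodule.mul_le.2 fun p hp q hq m hm => ?_
  obtain ⟨u, hu, v, hv, rfl⟩ := Finset.mem_add.1 (support_coeff_mul_subset p q hm)
  simp only [Set.mem_ofPred_eq, map_add]
  exact add_le_add (hp hu) (hq hv)

theorem degreeGE_antitone : Antitone (degreeGE R D : ℕ → Submodule R R[M]) :=
  fun _ b hab _ hp m hm => hab.trans (show b ≤ D m from hp hm)

theorem degreeGE_one_pow_le (k : ℕ) : degreeGE R D 1 ^ k ≤ degreeGE R D k := by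
  induction k with
  | zero => exact fun _ _ _ _ => Nat.zero_le _
  | succ k ih => rw [pow_succ]; exact (mul_le_mul' ih le_rfl).trans (degreeGE_mul_le R D k 1)

theorem single_mem_degreeGE (m : M) (c : R) : single m c ∈ degreeGE R D (D m) := by
  classical
  intro m' hm'
  rw [Finset.mem_singleton.mp (Finsupp.support_single_subset hm')]
  exact Nat.le_refl _

theorem coeff_eq_zero_of_mem_degreeGE {k : ℕ} {p : R[M]} (hp : p ∈ degreeGE R D k) {m : M}
    (hm : D m < k) : p.coeff m = 0 :=
  (mem_supported'.mp hp) m (by simpa using hm)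

end AddMonoidAlgebra

namespace FreeLieAlgebra

variable (R : Type*) [CommRing R] {α : Type*}

noncomputable def toWordAlgebra : FreeLieAlgebra R α →ₗ⁅R⁆ R[FreeAddMonoid α] :=
  lift R fun a => single (FreeAddMonoid.of a) 1

@[simp]
theorem toWordAlgebra_of (a : α) : toWordAlgebra R (of R a) = single (FreeAddMonoid.of a) 1 :=
  lift_of_apply _ _

theorem toWordAlgebra_mem_degreeGE_one (x : FreeLieAlgebra R α) :
    toWordAlgebra R x ∈ degreeGE R FreeAddMonoid.lengthHom 1 := by
  let H : LieSubalgebra R R[FreeAddMonoid α] :=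
    { degreeGE R FreeAddMonoid.lengthHom 1 with
      lie_mem' := fun {p q} hp hq => by
        rw [Ring.lie_def]
        exact degreeGE_antitone R _ (show 1 ≤ 1 + 1 by norm_num)
          (sub_mem (degreeGE_mul_le R _ 1 1 (Submodule.mul_mem_mul hp hq))
            (degreeGE_mul_le R _ 1 1 (Submodule.mul_mem_mul hq hp))) }
  exact lift_apply_mem (H := H) (fun a => single_mem_degreeGE R _ (FreeAddMonoid.of a) 1) x

theorem coeff_toWordAlgebra_eq_zero_of_mem_lowerCentralSeries {k : ℕ} {x : FreeLieAlgebra R α}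
    (hx : x ∈ lowerCentralSeries R (FreeLieAlgebra R α) (FreeLieAlgebra R α) k)
    {w : FreeAddMonoid α} (hw : FreeAddMonoid.lengthHom w ≤ k) :
    (toWordAlgebra R x).coeff w = 0 :=
  coeff_eq_zero_of_mem_degreeGE R _ (degreeGE_one_pow_le R _ (k + 1)
    ((toWordAlgebra R).mem_pow_of_mem_lowerCentralSeries (toWordAlgebra_mem_degreeGE_one R) hx))
    (by omega)

theorem toWordAlgebra_ad_pow_mem_gradeBy (j t : α) (n : ℕ) :
    toWordAlgebra R ((ad R _ (of R j) ^ n) (of R t)) ∈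
      gradeBy R FreeAddMonoid.content (n • {j} + {t}) := by
  rw [LieHom.map_ad_pow, toWordAlgebra_of, toWordAlgebra_of]
  exact SetLike.ad_pow_mem_graded (gradeBy R FreeAddMonoid.content) (single_mem_gradeBy _ _ _)
    (single_mem_gradeBy _ _ _) n

theorem coeff_toWordAlgebra_ad_pow_of {j t : α} (htj : t ≠ j) (n : ℕ) :
    (toWordAlgebra R ((ad R _ (of R j) ^ n) (of R t))).coeff
      (n • FreeAddMonoid.of j + FreeAddMonoid.of t) = 1 := by
  rw [LieHom.map_ad_pow, toWordAlgebra_of, toWordAlgebra_of]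
  induction n with
  | zero => simp
  | succ n ih =>
    rw [pow_succ', Module.End.mul_apply, ad_apply, Ring.lie_def, coeff_sub, Finsupp.sub_apply,
      succ_nsmul', add_assoc, coeff_single_mul_eq_mul_coeff (n • FreeAddMonoid.of j +
        FreeAddMonoid.of t) (fun _ _ => add_right_inj _), ih, coeff_mul_single_of_forall_add_ne]
    · simp
    -- the word ends in the letter `t ≠ j`, so it never comes from multiplying by `j` on the right
    · exact fun d => by rw [← add_assoc]; exact FreeAddMonoid.add_of_ne_add_of htj.symm _ _

theorem coeff_toWordAlgebra_ad_pow [DecidableEq α] {σ : Equiv.Perm α} (hσ : ∀ a, σ a ≠ a)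
    {n : ℕ} (hn : n ≠ 1 ∨ ∀ a, σ (σ a) ≠ a) (i j : α) :
    (toWordAlgebra R ((ad R _ (of R j) ^ n) (of R (σ j)))).coeff
      (n • FreeAddMonoid.of i + FreeAddMonoid.of (σ i)) = if i = j then 1 else 0 := by
  split_ifs with hij
  · subst hij
    exact coeff_toWordAlgebra_ad_pow_of R (hσ i) n
  · refine Finsupp.notMem_support_iff.mp fun hw => hij ?_
    have := toWordAlgebra_ad_pow_mem_gradeBy R j (σ j) n _ hw
    rw [map_add, map_nsmul, FreeAddMonoid.content, FreeAddMonoid.lift_eval_of,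
      FreeAddMonoid.lift_eval_of] at this
    exact Multiset.eq_of_nsmul_singleton_add_singleton_eq hσ hn this

end FreeLieAlgebra

theorem FreeNilpotentLie.linearIndependent_ad_pow_gen (K : Type*) [Field K] (r s : ℕ)
    {σ : Equiv.Perm (Fin r)} (hσ : ∀ a, σ a ≠ a) {n : ℕ} (hn : n ≠ 1 ∨ ∀ a, σ (σ a) ≠ a)
    (hns : n < s) :
    LinearIndependent K fun i =>
      (ad K (FreeNilpotentLie K r s) (gen K r s i) ^ n) (gen K r s (σ i)) := by
  let coeffs : FreeLieAlgebra K (Fin r) →ₗ[K] Fin r → K := LinearMap.pi fun i =>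
    (AddMonoidAlgebra.basis _ K).coord (n • FreeAddMonoid.of i + FreeAddMonoid.of (σ i)) ∘ₗ
      (FreeLieAlgebra.toWordAlgebra K).toLinearMap
  have hcoeffs : (lowerCentralSeries K (FreeLieAlgebra K (Fin r)) (FreeLieAlgebra K (Fin r))
      s).toSubmodule ≤ LinearMap.ker coeffs := fun x hx => funext fun i =>
    FreeLieAlgebra.coeff_toWordAlgebra_eq_zero_of_mem_lowerCentralSeries K hx
      (by simp [FreeAddMonoid.lengthHom]; omega)
  refine LinearIndependent.of_comp (Submodule.liftQ _ coeffs hcoeffs) ?_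
  have hdual : Submodule.liftQ _ coeffs hcoeffs ∘
      (fun i => (ad K (FreeNilpotentLie K r s) (gen K r s i) ^ n) (gen K r s (σ i))) =
      fun j => Pi.single j 1 := by
    funext j i
    rw [Function.comp_apply, gen, gen, LieSubmodule.Quotient.ad_pow_mk', Pi.single_apply]
    exact FreeLieAlgebra.coeff_toWordAlgebra_ad_pow K hσ hn i j
  rw [hdual]
  exact Pi.linearIndependent_single_one (Fin r) K

theorem eta_and_brackets_linearIndependent_general
    (K : Type*) [Field K] (r s : ℕ) (hr : 2 ≤ r) (hs : 3 ≤ s)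
    (h : 3 ≤ r ∨ 4 ≤ s) :
    LinearIndependent K (fun i : Fin r =>
      (LieAlgebra.ad K (FreeNilpotentLie K r s) (FreeNilpotentLie.gen K r s i) ^ (s - 2))
        (FreeNilpotentLie.gen K r s (finRotate r i))) ∧
    LinearIndependent K (fun i : Fin r =>
      ⁅FreeNilpotentLie.gen K r s i,
        (LieAlgebra.ad K (FreeNilpotentLie K r s) (FreeNilpotentLie.gen K r s i) ^ (s - 2))
          (FreeNilpotentLie.gen K r s (finRotate r i))⁆) := by
  have hσ : ∀ a, finRotate r a ≠ a := finRotate_ne_self hr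
  have hσσ {n : ℕ} (hn : 4 ≤ s → n ≠ 1) : n ≠ 1 ∨ ∀ a, finRotate r (finRotate r a) ≠ a :=
    h.symm.imp hn finRotate_finRotate_ne_self
  have hbracket (x y : FreeNilpotentLie K r s) :
      ⁅x, (ad K _ x ^ (s - 2)) y⁆ = (ad K _ x ^ (s - 1)) y := by
    rw [show s - 1 = s - 2 + 1 by omega, pow_succ', Module.End.mul_apply, ad_apply]
  simp only [hbracket]
  exact ⟨FreeNilpotentLie.linearIndependent_ad_pow_gen K r s hσ (hσσ (by omega)) (by omega),
    FreeNilpotentLie.linearIndependent_ad_pow_gen K r s hσ (hσσ (by omega)) (by omega)⟩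

/-- Let `L` be the free nilpotent Lie algebra of rank `r ≥ 2` and step
`s ≥ 3` over a field of characteristic zero, with `r ≥ 3` or `s ≥ 4`.  With
`η_i = (ad X_i)^{s-2} (X_{i+1})` (indices cyclic, so `η_r = (ad X_r)^{s-2} (X_1)`),
the families `(η_1, …, η_r)` and `(⁅X_1, η_1⁆, …, ⁅X_r, η_r⁆)` are both linearly
independent. -/
theorem eta_and_brackets_linearIndependent
    (K : Type*) [Field K] [CharZero K] (r s : ℕ) (hr : 2 ≤ r) (hs : 3 ≤ s)
    (h : 3 ≤ r ∨ 4 ≤ s) :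
    LinearIndependent K (fun i : Fin r =>
      (LieAlgebra.ad K (FreeNilpotentLie K r s) (FreeNilpotentLie.gen K r s i) ^ (s - 2))
        (FreeNilpotentLie.gen K r s (finRotate r i))) ∧
    LinearIndependent K (fun i : Fin r =>
      ⁅FreeNilpotentLie.gen K r s i,
        (LieAlgebra.ad K (FreeNilpotentLie K r s) (FreeNilpotentLie.gen K r s i) ^ (s - 2))
          (FreeNilpotentLie.gen K r s (finRotate r i))⁆) :=
  eta_and_brackets_linearIndependent_general K r s hr hs h
end

section
/- Let K be a field of characteristic zero and let L be the free nilpotent Lie algebra of rank 2 and step 3 over K (the Cartan algebra), with generators x_1, x_2, and set x_{12} = ⁅x_1, x_2⁆, x_{112} = ⁅x_1, x_{12}⁆, x_{212} = ⁅x_2, x_{12}⁆. Then the quadratic function p ↦ ½ p(x_{12})² + p(x_1)p(x_{212}) − p(x_2)p(x_{112}) on L* is infinitesimally invariant under the coadjoint representation: for every p ∈ L* and every v ∈ L, p(⁅v, x_{12}⁆)·p(x_{12}) + p(⁅v, x_1⁆)·p(x_{212}) + p(x_1)·p(⁅v, x_{212}⁆) − p(⁅v, x_2⁆)·p(x_{112})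 − p(x_2)·p(⁅v, x_{112}⁆) = 0. (Hence ½ξ_{12}² + ξ_1ξ_{212} − ξ_2ξ_{112} is a Casimir function of the Cartan group.) -/
namespace CartanAlg

variable (K : Type*) [Field K]

noncomputable def x1 : FreeNilpotentLie K 2 3 := FreeNilpotentLie.gen K 2 3 0
noncomputable def x2 : FreeNilpotentLie K 2 3 := FreeNilpotentLie.gen K 2 3 1
noncomputable def x12 : FreeNilpotentLie K 2 3 := ⁅x1 K, x2 K⁆
noncomputable def x112 : FreeNilpotentLie K 2 3 := ⁅x1 K, x12 K⁆
noncomputable def x212 : FreeNilpotentLie K 2 3 := ⁅x2 K, x12 K⁆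

end CartanAlg

open LieModule LieSubalgebra

namespace LieSubalgebra

variable {R L : Type*} [CommRing R] [LieRing L] [LieAlgebra R L]

open Submodule in
theorem coe_lieSpan_eq_span_of_forall_lie_mem_span {s : Set L}
    (hs : ∀ a ∈ s, ∀ b ∈ s, ⁅a, b⁆ ∈ span R s) :
    lieSpan R L s = span R s := by
  suffices ∀ {a b}, a ∈ span R s → b ∈ span R s → ⁅a, b⁆ ∈ span R s by
    refine le_antisymm ?_ submodule_span_le_lieSpan
    change _ ≤ ({ span R s with lie_mem' := this } : LieSubalgebra R L)
    rw [lieSpan_le]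
    exact subset_span
  intro a b ha hb
  induction ha, hb using span_induction₂ with
  | mem_mem a b ha hb => exact hs a ha b hb
  | zero_left b _ => simp
  | zero_right a _ => simp
  | add_left a b c _ _ _ hac hbc => simpa [add_lie] using add_mem hac hbc
  | add_right a b c _ _ _ hab hac => simpa [lie_add] using add_mem hab hac
  | smul_left r a b _ _ h => simpa [smul_lie] using smul_mem _ r h
  | smul_right r a b _ _ h => simpa [lie_smul] using smul_mem _ r h

end LieSubalgebra

theorem FreeLieAlgebra.lieSpan_range_of (R X : Type*) [CommRing R] :
    lieSpan R (FreeLieAlgebra R X) (Set.range (of R)) = ⊤ := by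
  set S := lieSpan R (FreeLieAlgebra R X) (Set.range (of R))
  let f := lift R fun i ↦ (⟨of R i, subset_lieSpan ⟨i, rfl⟩⟩ : S)
  have hf : S.incl.comp f = LieHom.id := hom_ext fun i ↦ by simp [f]
  refine eq_top_iff.mpr fun w _ ↦ ?_
  have hw : (f w : FreeLieAlgebra R X) = w := LieHom.congr_fun hf w
  exact hw ▸ (f w).2

namespace LieModule

variable {R L M : Type*} [CommRing R] [LieRing L] [LieAlgebra R L]
  [AddCommGroup M] [Module R M] [LieRingModule L M]

theorem lie_mem_lowerCentralSeries_succ (x : L) {m : M} {k : ℕ}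
    (hm : m ∈ lowerCentralSeries R L M k) : ⁅x, m⁆ ∈ lowerCentralSeries R L M (k + 1) := by
  rw [lowerCentralSeries_succ]
  exact LieSubmodule.lie_mem_lie (LieSubmodule.mem_top x) hm

theorem lie_eq_zero_of_lowerCentralSeries_succ_eq_bot {k : ℕ}
    (h : lowerCentralSeries R L M (k + 1) = ⊥) (x : L) {m : M}
    (hm : m ∈ lowerCentralSeries R L M k) : ⁅x, m⁆ = 0 := by
  have := lie_mem_lowerCentralSeries_succ (R := R) x hm
  rwa [h, LieSubmodule.mem_bot] at this

end LieModule

namespace LieAlgebra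

theorem lowerCentralSeries_quotient_lowerCentralSeries_eq_bot (R L : Type*) [CommRing R]
    [LieRing L] [LieAlgebra R L] (k : ℕ) :
    lowerCentralSeries R (L ⧸ lowerCentralSeries R L L k) (L ⧸ lowerCentralSeries R L L k) k
      = ⊥ := by
  have h : lowerCentralSeries R L (L ⧸ lowerCentralSeries R L L k) k = ⊥ := by
    rw [← map_lowerCentralSeries_eq k (LieSubmodule.Quotient.surjective_mk' _),
      LieSubmodule.Quotient.map_mk'_eq_bot_le]
  rw [← LieSubmodule.toSubmodule_inj, ← coe_lowerCentralSeries_ideal_quot_eq, h]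
  rfl

variable {R L : Type*} [CommRing R] [LieRing L] [LieAlgebra R L] {x y : L}

open Submodule in
theorem span_triple_sup_lowerCentralSeries_two_eq_top (hgen : lieSpan R L {x, y} = ⊤) :
    span R {x, y, ⁅x, y⁆} ⊔ (lowerCentralSeries R L L 2).toSubmodule = ⊤ := by
  set s : Set L := {x, y, ⁅x, y⁆} ∪ lowerCentralSeries R L L 2
  have hs : span R s = span R {x, y, ⁅x, y⁆} ⊔ (lowerCentralSeries R L L 2).toSubmodule := by
    rw [Submodule.span_union, ← LieSubmodule.coe_toSubmodule, span_eq]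
  have hxy : ⁅x, y⁆ ∈ lowerCentralSeries R L L 1 := lie_mem_lowerCentralSeries_succ x (by simp)
  have lcs_two_le_one := antitone_lowerCentralSeries R L L (show 1 ≤ 2 by norm_num)
  have h_lcs_one : ∀ a b : L, a ∈ lowerCentralSeries R L L 1 ∨ b ∈ lowerCentralSeries R L L 1 →
      ⁅a, b⁆ ∈ span R s := by
    rintro a b (ha | hb)
    · rw [← lie_skew]
      exact neg_mem (subset_span (Or.inr (lie_mem_lowerCentralSeries_succ b ha)))
    · exact subset_span (Or.inr (lie_mem_lowerCentralSeries_succ a hb))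
  have h_cases : ∀ a ∈ s, a = x ∨ a = y ∨ a ∈ lowerCentralSeries R L L 1 := by
    rintro a ((rfl | rfl | rfl) | ha)
    exacts [Or.inl rfl, Or.inr (Or.inl rfl), Or.inr (Or.inr hxy),
      Or.inr (Or.inr (lcs_two_le_one ha))]
  have hxy_mem : ⁅x, y⁆ ∈ span R s := subset_span (Or.inl (by simp))
  have h_closed : ∀ a ∈ s, ∀ b ∈ s, ⁅a, b⁆ ∈ span R s := by
    intro a ha b hb
    rcases h_cases a ha with rfl | rfl | ha <;> rcases h_cases b hb with rfl | rfl | hb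
    all_goals first
      | exact h_lcs_one _ _ (Or.inl ‹_›)
      | exact h_lcs_one _ _ (Or.inr ‹_›)
      | exact hxy_mem
      | (rw [lie_self]; exact zero_mem _)
      | (rw [← lie_skew]; exact neg_mem hxy_mem)
  rw [← hs, eq_top_iff, ← LieSubalgebra.coe_lieSpan_eq_span_of_forall_lie_mem_span h_closed]
  have hxy_sub : ({x, y} : Set L) ⊆ s := fun a ha ↦ Or.inl (by rcases ha with rfl | rfl <;> simp)
  intro v _
  exact lieSpan_mono hxy_sub (by rw [hgen]; trivial)

theorem cartan_casimir_lie_eq_zero (hgen : lieSpan R L {x, y} = ⊤)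
    (hstep : lowerCentralSeries R L L 3 = ⊥) (p : Module.Dual R L) (v : L) :
    p ⁅v, ⁅x, y⁆⁆ * p ⁅x, y⁆ +
      p ⁅v, x⁆ * p ⁅y, ⁅x, y⁆⁆ + p x * p ⁅v, ⁅y, ⁅x, y⁆⁆⁆ -
      p ⁅v, y⁆ * p ⁅x, ⁅x, y⁆⁆ - p y * p ⁅v, ⁅x, ⁅x, y⁆⁆⁆ = 0 := by
  have hv : v ∈ Submodule.span R {x, y, ⁅x, y⁆} ⊔ (lowerCentralSeries R L L 2).toSubmodule := by
    rw [span_triple_sup_lowerCentralSeries_two_eq_top hgen]; trivial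
  obtain ⟨u, hu, d, hd, rfl⟩ := Submodule.mem_sup.mp hv
  obtain ⟨a, b, c, rfl⟩ := Submodule.mem_span_triple.mp hu
  have central : ∀ z ∈ lowerCentralSeries R L L 2, ∀ w : L, ⁅w, z⁆ = 0 :=
    fun z hz w ↦ lie_eq_zero_of_lowerCentralSeries_succ_eq_bot hstep w hz
  have hxy : ⁅x, y⁆ ∈ lowerCentralSeries R L L 1 := lie_mem_lowerCentralSeries_succ x (by simp)
  have hxxy := central _ (lie_mem_lowerCentralSeries_succ x hxy)
  have hyxy := central _ (lie_mem_lowerCentralSeries_succ y hxy)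
  have hd_central : ∀ w : L, ⁅d, w⁆ = 0 := fun w ↦ by rw [← lie_skew, central d hd, neg_zero]
  have hyx : ⁅y, x⁆ = -⁅x, y⁆ := neg_eq_iff_eq_neg.mp (lie_skew x y)
  have hxyx : ⁅⁅x, y⁆, x⁆ = -⁅x, ⁅x, y⁆⁆ := neg_eq_iff_eq_neg.mp (lie_skew _ _)
  have hxyy : ⁅⁅x, y⁆, y⁆ = -⁅y, ⁅x, y⁆⁆ := neg_eq_iff_eq_neg.mp (lie_skew _ _)
  simp only [add_lie, smul_lie, lie_self, hxxy, hyxy, hd_central, hyx, hxyx, hxyy, smul_zero, smul_neg,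
    add_zero, zero_add, map_add, map_smul, map_neg, map_zero, smul_eq_mul]
  ring

end LieAlgebra

theorem FreeNilpotentLie.lieSpan_range_gen (K : Type*) [Field K] (r s : ℕ) :
    lieSpan K (FreeNilpotentLie K r s) (Set.range (gen K r s)) = ⊤ := by
  rw [eq_top_iff]
  rintro v -
  obtain ⟨w, rfl⟩ := LieSubmodule.Quotient.surjective_mk' _ v
  have hw : w ∈ lieSpan K _ (Set.range (FreeLieAlgebra.of K)) := by
    rw [FreeLieAlgebra.lieSpan_range_of]; trivial
  induction hw using lieSpan_induction with
  | mem w hw =>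
    obtain ⟨i, rfl⟩ := hw
    exact subset_lieSpan ⟨i, rfl⟩
  | zero => exact zero_mem _
  | add _ _ _ _ ha hb => exact add_mem ha hb
  | smul t _ _ ha => exact SMulMemClass.smul_mem t ha
  | lie _ _ _ _ ha hb => exact lie_mem _ ha hb

namespace CartanAlg

theorem lieSpan_x1_x2 (K : Type*) [Field K] :
    lieSpan K (FreeNilpotentLie K 2 3) {x1 K, x2 K} = ⊤ := by
  rw [← FreeNilpotentLie.lieSpan_range_gen K 2 3]
  congr 1
  ext v
  simp [Fin.exists_fin_two, x1, x2, eq_comm]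

end CartanAlg

open CartanAlg in
theorem cartan_quadratic_casimir_general
    (K : Type*) [Field K]
    (p : Module.Dual K (FreeNilpotentLie K 2 3)) (v : FreeNilpotentLie K 2 3) :
    p ⁅v, x12 K⁆ * p (x12 K) +
      p ⁅v, x1 K⁆ * p (x212 K) + p (x1 K) * p ⁅v, x212 K⁆ -
      p ⁅v, x2 K⁆ * p (x112 K) - p (x2 K) * p ⁅v, x112 K⁆ = 0 :=
  LieAlgebra.cartan_casimir_lie_eq_zero (lieSpan_x1_x2 K)
    (LieAlgebra.lowerCentralSeries_quotient_lowerCentralSeries_eq_bot K _ 3) p v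

open CartanAlg in
/-- On the Cartan algebra (free nilpotent, rank 2, step 3) the quadratic
function `p ↦ ½ p(x₁₂)² + p(x₁) p(x₂₁₂) − p(x₂) p(x₁₁₂)` is infinitesimally invariant under
the coadjoint representation. -/
theorem cartan_quadratic_casimir
    (K : Type*) [Field K] [CharZero K]
    (p : Module.Dual K (FreeNilpotentLie K 2 3)) (v : FreeNilpotentLie K 2 3) :
    p ⁅v, x12 K⁆ * p (x12 K) +
      p ⁅v, x1 K⁆ * p (x212 K) + p (x1 K) * p ⁅v, x212 K⁆ -
      p ⁅v, x2 K⁆ * p (x112 K) - p (x2 K) * p ⁅v, x112 K⁆ = 0 :=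
  cartan_quadratic_casimir_general K p v
end
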